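/- The number of cycle covers of a k-regular directed graph on n vertices having exactly r cycles is at most C(n,r) · k^(n−r). -/

import Mathlib

/-!
Pick one vertex on each cycle of a cycle cover `σ` and let `T` be the set of these `r` vertices
(fixed points, which `cycleType` does not count, stay off `T`).
Then `σ` is determined by `T` and by its values off `T`, and off `T` each value `σ v` is one of
the `k` out-neighbours of `v`: this leaves at most `C(n,r) * k^(n-r)` possibilities.
-/

open Equiv Finset

namespace Equiv.Perm

variable {α : Type*}

theorem pow_apply_eq_pow_apply_of_eqOn_compl {σ τ : Perm α} {S : Set α}
    (h : Set.EqOn σ τ Sᶜ) {x : α} {j : ℕ} (hx : ∀ i < j, (σ ^ i) x ∉ S) :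
    (τ ^ j) x = (σ ^ j) x := by
  induction j with
  | zero => rfl
  | succ j ih =>
    rw [pow_succ', pow_succ', mul_apply, mul_apply, ih fun i hi => hx i (by omega)]
    exact (h (hx j (by omega))).symm

theorem eq_of_eqOn_compl [Finite α] {σ τ : Perm α} {S : Set α}
    (hσ : S.Pairwise fun v w => ¬σ.SameCycle v w)
    (hτ : S.Pairwise fun v w => ¬τ.SameCycle v w)
    (h : Set.EqOn σ τ Sᶜ) : σ = τ := by
  classical
  -- The `σ`-orbit from `σ v` back to `v` stays off `S`, so `τ` follows it too; hence
  -- `τ⁻¹ (σ v)` lies in `S` and on the `τ`-cycle of `v`, which forces it to be `v`.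
  ext v
  by_cases hv : v ∈ S
  swap
  · exact h hv
  have hret : ∃ j, (σ ^ (j + 1)) v = v :=
    ⟨orderOf σ - 1, by rw [Nat.sub_add_cancel (orderOf_pos σ), pow_orderOf_eq_one]; rfl⟩
  set j := Nat.find hret
  have hpath : (τ ^ j) (σ v) = v := by
    rw [pow_apply_eq_pow_apply_of_eqOn_compl h, ← mul_apply, ← pow_succ, Nat.find_spec hret]
    intro i hi hiS
    rw [← mul_apply, ← pow_succ] at hiS
    exact hσ hiS hv (Nat.find_min hret hi) (sameCycle_pow_left.2 (SameCycle.refl σ v))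
  set u := τ.symm (σ v)
  have hu : τ u = σ v := τ.apply_symm_apply _
  have huS : u ∈ S := by
    by_contra huS
    exact huS (σ.injective ((h huS).trans hu) ▸ hv)
  have huv : u = v := by
    by_contra hne
    exact hτ huS hv hne ⟨(j + 1 : ℕ), by rw [zpow_natCast, pow_succ, mul_apply, hu, hpath]⟩
  exact hu.symm.trans (congrArg τ huv)

theorem exists_cycle_transversal [Fintype α] [DecidableEq α] (σ : Perm α) :
    ∃ T : Finset α, T.card = σ.cycleType.card ∧
      (T : Set α).Pairwise fun v w => ¬σ.SameCycle v w := by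
  choose p hp using fun c : σ.cycleFactorsFinset =>
    (mem_cycleFactorsFinset_iff.1 c.2).1.nonempty_support
  have hcycleOf (c : σ.cycleFactorsFinset) : σ.cycleOf (p c) = c :=
    (cycle_is_cycleOf (hp c) c.2).symm
  have hp_inj : Function.Injective p := fun c c' h =>
    Subtype.ext ((hcycleOf c).symm.trans (h ▸ hcycleOf c'))
  refine ⟨univ.image p, ?_, ?_⟩
  · rw [card_image_of_injective _ hp_inj, card_univ, Fintype.card_coe, cycleType_def,
      Multiset.card_map, card_val]
  · simp only [coe_image, coe_univ, Set.image_univ]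
    rintro _ ⟨c, rfl⟩ _ ⟨c', rfl⟩ hne hsc
    exact hne (congrArg p (Subtype.ext
      ((hcycleOf c).symm.trans (hsc.cycleOf_eq.trans (hcycleOf c')))))

end Equiv.Perm

theorem card_sigma_powersetCard_pi {V : Type*} [Fintype V] (G : V → V → Prop) {k : ℕ}
    (hG : ∀ v, Nat.card {w // G v w} = k) (r : ℕ) :
    Nat.card (Σ T : powersetCard r (univ : Finset V),
        ∀ v : {v // v ∉ (T : Finset V)}, {w // G v w}) =
      (Fintype.card V).choose r * k ^ (Fintype.card V - r) := by
  classical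
  have hfiber (T : powersetCard r (univ : Finset V)) :
      Nat.card (∀ v : {v // v ∉ (T : Finset V)}, {w // G v w}) = k ^ (Fintype.card V - r) := by
    rw [Nat.card_pi, prod_congr rfl fun v _ => hG v.1, prod_const, card_univ,
      Fintype.card_subtype_compl, Fintype.card_coe, (mem_powersetCard_univ.1 T.2)]
  rw [Nat.card_sigma, sum_congr rfl fun T _ => hfiber T, sum_const, card_univ, Fintype.card_coe,
    card_powersetCard, card_univ, smul_eq_mul]

theorem cycle_cover_count_bound_general (V : Type) [Fintype V] [DecidableEq V]
    (n k r : ℕ) (hn : Fintype.card V = n)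
    (G : V → V → Prop)
    (hout : ∀ v, {w | G v w}.ncard = k) :
    Nat.card {σ : Equiv.Perm V // (∀ v, G v (σ v)) ∧ σ.cycleType.card = r}
      ≤ n.choose r * k ^ (n - r) := by
  choose T hT_card hT_pairwise using Perm.exists_cycle_transversal (α := V)
  let encode (σ : {σ : Perm V // (∀ v, G v (σ v)) ∧ σ.cycleType.card = r}) :
      Σ T : powersetCard r (univ : Finset V), ∀ v : {v // v ∉ (T : Finset V)}, {w // G v w} :=
    ⟨⟨T σ, mem_powersetCard_univ.2 ((hT_card σ).trans σ.2.2)⟩,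
      fun v => ⟨σ.1 v, σ.2.1 v⟩⟩
  have hencode : Function.Injective encode := by
    intro σ τ h
    have hT : T σ = T τ := congrArg (fun q => q.1.1) h
    refine Subtype.ext
      (Perm.eq_of_eqOn_compl (hT_pairwise σ) (hT ▸ hT_pairwise τ) fun v hv => ?_)
    replace hv : v ∉ T σ := hv
    have hv' : v ∉ T τ := hT ▸ hv
    simpa [encode, hv, hv'] using
      congrArg (fun q => if h : v ∈ q.1.1 then v else (q.2 ⟨v, h⟩).1) h
  subst hn
  exact (Nat.card_le_card_of_injective encode hencode).trans
    (card_sigma_powersetCard_pi G (fun v => Nat.card_coe_set_eq _ ▸ hout v) r).le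

/-- The number of cycle covers of a `k`-regular directed graph on `n` vertices
having exactly `r` cycles is at most `C(n,r) * k^(n-r)`. Cycle covers are encoded
as permutations `σ` all of whose arcs `(v, σ v)` lie in the graph; the number of
cycles is the number of cycles of the permutation. -/
theorem cycle_cover_count_bound (V : Type) [Fintype V] [DecidableEq V]
    (n k r : ℕ) (hn : Fintype.card V = n)
    (G : V → V → Prop) (hloopless : ∀ v, ¬ G v v)
    (hout : ∀ v, {w | G v w}.ncard = k)
    (hin : ∀ v, {w | G w v}.ncard = k) :
    Nat.card {σ : Equiv.Perm V // (∀ v, G v (σ v)) ∧ σ.cycleType.card = r}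
      ≤ n.choose r * k ^ (n - r) :=
  cycle_cover_count_bound_general V n k r hn G hout
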